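/- With δp as above, the induced metric variation δg_{āb̄} = -g_{āc} δp_{b̄}^c - g_{cb̄} δp_{ā}^c equals (1/(2‖Ω‖²))(Ω̄^{cd}_{ ā}(δΩ)_{cd b̄} + Ω̄^{cd}_{ b̄}(δΩ)_{cd ā}), and if δΩ is primitive (so that the expression is already symmetric), δg_{āb̄} = (1/‖Ω‖²) Ω̄^{cd}_{ ā}(δΩ)_{cd b̄}. -/
import Mathlib


open scoped BigOperators ComplexConjugate

/-- With `δp_{c̄}^d = -(1/(2‖Ω‖²)) Ω̄^{abd}(δΩ)_{ab c̄}` (for `Ω = c ε`, `c ≠ 0`,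
on a 3-dimensional hermitian vector space, in an orthonormal frame where `g_{a b̄} = δ_{ab}`),
the induced metric variation `δg_{āb̄} = -g_{āc} δp_{b̄}^c - g_{cb̄} δp_{ā}^c` equals
`(1/(2‖Ω‖²))(Ω̄^{cd}_{ā}(δΩ)_{cd b̄} + Ω̄^{cd}_{b̄}(δΩ)_{cd ā})`, and if `δΩ` is primitive (so
that the expression is already symmetric), `δg_{āb̄} = (1/‖Ω‖²) Ω̄^{cd}_{ā}(δΩ)_{cd b̄}`. -/
theorem stmt12 (c : ℂ) (hc : c ≠ 0)
    (Ω : Fin 3 → Fin 3 → Fin 3 → ℂ)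
    (hΩanti1 : ∀ a b d, Ω a b d = -Ω b a d)
    (hΩanti2 : ∀ a b d, Ω a b d = -Ω a d b)
    (hΩval : Ω 0 1 2 = c)
    (δΩ : Fin 3 → Fin 3 → Fin 3 → ℂ)
    (hδanti : ∀ a b e, δΩ a b e = -δΩ b a e)
    (normΩsq : ℂ)
    (hnorm : normΩsq = (1 / 6) * ∑ a, ∑ b, ∑ e, conj (Ω a b e) * Ω a b e)
    (δp : Fin 3 → Fin 3 → ℂ)
    (hδp : ∀ e d, δp e d = -(1 / (2 * normΩsq)) * ∑ a, ∑ b, conj (Ω a b d) * δΩ a b e)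
    (δg : Fin 3 → Fin 3 → ℂ)
    (hδg : ∀ a b, δg a b = -δp b a - δp a b) :
    (∀ a b, δg a b =
        (1 / (2 * normΩsq)) *
          ((∑ p, ∑ q, conj (Ω p q a) * δΩ p q b) + ∑ p, ∑ q, conj (Ω p q b) * δΩ p q a)) ∧
      ((∀ a b, (∑ p, ∑ q, conj (Ω p q a) * δΩ p q b) = ∑ p, ∑ q, conj (Ω p q b) * δΩ p q a) →
        ∀ a b, δg a b = (1 / normΩsq) * ∑ p, ∑ q, conj (Ω p q a) * δΩ p q b) := by
  refine ⟨fun a b => ?_, fun hsym a b => ?_⟩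
  · rw [hδg, hδp, hδp]; ring
  · rw [hδg, hδp, hδp, ← hsym a b]; ring
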